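/- Let b ∈ C satisfy κ_λ(b) > τ. Then Π_{Δ_τ}(b) = x_λ(b); that is, the projection of b onto the OWL1 norm ball Δ_τ coincides with the projection of b onto the polyhedron {x ∈ C : ⟨λ, x⟩ = τ}. -/
import Mathlib


open Matrix

/-- The vector of absolute values of the entries of `x`, arranged in nonincreasing order. -/
noncomputable def absDesc {n : ℕ} (x : Fin n → ℝ) : Fin n → ℝ :=
  fun i => |x ((Tuple.sort fun j => |x j|) i.rev)|

/-- The ordered weighted ℓ1 (OWL1) norm `κ_λ(x) = ∑ i, λ_i |x|ᵢ↓`. -/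
noncomputable def kappa {n : ℕ} (lam x : Fin n → ℝ) : ℝ :=
  ∑ i, lam i * absDesc x i

/-- The monotone nonnegative cone `C = {x : x₁ ≥ x₂ ≥ … ≥ xₙ ≥ 0}`. -/
def coneC (n : ℕ) : Set (Fin n → ℝ) :=
  {x | (∀ i j : Fin n, i ≤ j → x j ≤ x i) ∧ ∀ i, 0 ≤ x i}

/-- `P` is a signed permutation matrix. -/
def IsSignedPerm {n : ℕ} (P : Matrix (Fin n) (Fin n) ℝ) : Prop :=
  ∃ σ : Equiv.Perm (Fin n), ∃ ε : Fin n → ℝ,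
    (∀ i, ε i = 1 ∨ ε i = -1) ∧ ∀ i j, P i j = if j = σ i then ε i else 0

/-- `p` minimizes `½‖x − b‖²` over `S`. -/
def IsMinimizer {n : ℕ} (S : Set (Fin n → ℝ)) (b p : Fin n → ℝ) : Prop :=
  p ∈ S ∧ ∀ x ∈ S, (1/2) * ∑ i, (p i - b i)^2 ≤ (1/2) * ∑ i, (x i - b i)^2


section aux
variable {n : ℕ}

lemma absDesc_antitone (x : Fin n → ℝ) : Antitone (absDesc x) := by
  intro i j hij
  exact Tuple.monotone_sort (fun j => |x j|) (Fin.rev_le_rev.mpr hij)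

lemma absDesc_nonneg (x : Fin n → ℝ) (i : Fin n) : 0 ≤ absDesc x i := abs_nonneg _

/-- representation of `|x ∘ σ|` via `absDesc`. -/
lemma exists_perm_absDesc (x : Fin n → ℝ) (σ : Equiv.Perm (Fin n)) :
    ∃ ρ : Equiv.Perm (Fin n), ∀ i, |x (σ i)| = absDesc x (ρ i) := by
  refine ⟨σ.trans ((Tuple.sort fun j => |x j|).symm.trans Fin.revPerm), fun i => ?_⟩
  simp [absDesc, Fin.rev_rev]

lemma monovary_absDesc (μ : Fin n → ℝ) (hμ : ∀ i j : Fin n, i ≤ j → μ j ≤ μ i)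
    (x : Fin n → ℝ) : Monovary μ (absDesc x) := by
  intro i j hij
  rcases le_total i j with h | h
  · exact absurd (absDesc_antitone x h) (not_le.mpr hij)
  · exact hμ j i h

/-- Workhorse rearrangement bound. -/
lemma sum_mul_abs_comp_perm_le (μ : Fin n → ℝ) (hμ : ∀ i j : Fin n, i ≤ j → μ j ≤ μ i)
    (x : Fin n → ℝ) (σ : Equiv.Perm (Fin n)) :
    ∑ i, μ i * |x (σ i)| ≤ ∑ i, μ i * absDesc x i := by
  obtain ⟨ρ, hρ⟩ := exists_perm_absDesc x σ
  calc ∑ i, μ i * |x (σ i)| = ∑ i, μ i * absDesc x (ρ i) := by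
        exact Finset.sum_congr rfl fun i _ => by rw [hρ]
    _ ≤ ∑ i, μ i * absDesc x i :=
        (monovary_absDesc μ hμ x).sum_mul_comp_perm_le_sum_mul

lemma absDesc_of_mem_coneC {x : Fin n → ℝ} (hx : x ∈ coneC n) : absDesc x = x := by
  have hxabs : (fun j => |x j|) = x := funext fun j => abs_of_nonneg (hx.2 j)
  have h1 : Monotone (x ∘ (Fin.revPerm : Equiv.Perm (Fin n))) := by
    intro i j hij
    exact hx.1 _ _ (Fin.rev_le_rev.mpr hij)
  have h2 : Monotone (x ∘ (Tuple.sort x)) := Tuple.monotone_sort x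
  have h3 := Tuple.unique_monotone h2 h1
  funext i
  have : absDesc x i = x ((Tuple.sort x) i.rev) := by
    simp only [absDesc, hxabs]
    exact abs_of_nonneg (hx.2 _)
  rw [this]
  have := congrFun h3 i.rev
  simp only [Function.comp_apply, Fin.revPerm_apply, Fin.rev_rev] at this
  exact this

lemma sum_sq_absDesc (x : Fin n → ℝ) : ∑ i, (absDesc x i)^2 = ∑ i, (x i)^2 := by
  obtain ⟨ρ, hρ⟩ := exists_perm_absDesc x 1
  calc ∑ i, (absDesc x i)^2 = ∑ i, (absDesc x (ρ i))^2 := (Equiv.sum_comp ρ _).symm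
    _ = ∑ i, (x i)^2 := Finset.sum_congr rfl fun i _ => by
        rw [← hρ i]; simp [sq_abs]

end aux

section aux2
variable {n : ℕ}

lemma sum_sq_expand (b u : Fin n → ℝ) :
    ∑ i, (u i - b i)^2 = ∑ i, (u i)^2 - 2 * ∑ i, b i * u i + ∑ i, (b i)^2 := by
  calc ∑ i, (u i - b i)^2 = ∑ i, ((u i)^2 - 2 * (b i * u i) + (b i)^2) :=
        Finset.sum_congr rfl fun i _ => by ring
    _ = ∑ i, (u i)^2 - 2 * ∑ i, b i * u i + ∑ i, (b i)^2 := by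
        rw [Finset.sum_add_distrib, Finset.sum_sub_distrib, ← Finset.mul_sum]

/-- Reduction: any point of the OWL1 ball can be replaced by a point of the
polyhedron which is at least as close to `b`. -/
lemma reduce_to_polyhedron {n : ℕ} (lam : Fin n → ℝ) (τ : ℝ)
    (b : Fin n → ℝ) (hbC : b ∈ coneC n) (hb : τ < kappa lam b)
    (x : Fin n → ℝ) (hx : kappa lam x ≤ τ) :
    ∃ y, (y ∈ coneC n ∧ ∑ i, lam i * y i = τ) ∧
      ∑ i, (y i - b i)^2 ≤ ∑ i, (x i - b i)^2 := by
  set x' := absDesc x with hx'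
  have hx'C : x' ∈ coneC n := ⟨fun i j hij => absDesc_antitone x hij, absDesc_nonneg x⟩
  have hs : ∑ i, lam i * x' i ≤ τ := hx
  have hB : τ < ∑ i, lam i * b i := by
    rwa [kappa, absDesc_of_mem_coneC hbC] at hb
  -- x' is at least as close to b as x
  have dist1 : ∑ i, (x' i - b i)^2 ≤ ∑ i, (x i - b i)^2 := by
    have h1 : ∑ i, b i * x i ≤ ∑ i, b i * |x i| :=
      Finset.sum_le_sum fun i _ =>
        mul_le_mul_of_nonneg_left (le_abs_self _) (hbC.2 i)
    have h2 : ∑ i, b i * |x i| ≤ ∑ i, b i * x' i := by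
      have := sum_mul_abs_comp_perm_le b hbC.1 x 1
      simpa using this
    have hsq : ∑ i, (x' i)^2 = ∑ i, (x i)^2 := sum_sq_absDesc x
    rw [sum_sq_expand, sum_sq_expand, hsq]
    linarith
  -- move along the segment towards b to reach the hyperplane
  set s := ∑ i, lam i * x' i with hsdef
  set B := ∑ i, lam i * b i with hBdef
  have hBs : (0:ℝ) < B - s := by linarith
  set θ := (τ - s) / (B - s) with hθdef
  have hθ0 : 0 ≤ θ := div_nonneg (by linarith) hBs.le
  have hθ1 : θ ≤ 1 := (div_le_one hBs).mpr (by linarith)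
  have hθB : θ * (B - s) = τ - s := div_mul_cancel₀ _ hBs.ne'
  refine ⟨fun i => (1 - θ) * x' i + θ * b i, ⟨⟨?_, ?_⟩, ?_⟩, ?_⟩
  · intro i j hij
    have h1 := hx'C.1 i j hij
    have h2 := hbC.1 i j hij
    dsimp only
    nlinarith
  · intro i
    have h1 := hx'C.2 i
    have h2 := hbC.2 i
    dsimp only
    nlinarith
  · have : ∑ i, lam i * ((1 - θ) * x' i + θ * b i)
        = (1 - θ) * ∑ i, lam i * x' i + θ * ∑ i, lam i * b i := by
      rw [Finset.mul_sum, Finset.mul_sum, ← Finset.sum_add_distrib]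
      exact Finset.sum_congr rfl fun i _ => by ring
    rw [this]
    linear_combination hθB
  · have hsum : ∑ i, ((1 - θ) * x' i + θ * b i - b i)^2
        = (1 - θ)^2 * ∑ i, (x' i - b i)^2 := by
      rw [Finset.mul_sum]
      exact Finset.sum_congr rfl fun i _ => by ring
    rw [hsum]
    have hnn : 0 ≤ ∑ i, (x' i - b i)^2 :=
      Finset.sum_nonneg fun i _ => sq_nonneg _
    have h2 : (1 - θ)^2 ≤ 1 := by nlinarith
    have h3 := mul_le_of_le_one_left hnn h2
    linarith

end aux2

/-- for `b ∈ C` with `κ_λ(b) > τ`, the projection of `b` onto the OWL1 norm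
ball `Δ_τ` coincides with the projection of `b` onto `{x ∈ C : ⟨λ, x⟩ = τ}`. -/
theorem stmt3 {n : ℕ} (hn : 0 < n) (lam : Fin n → ℝ)
    (hmono : ∀ i j : Fin n, i ≤ j → lam j ≤ lam i)
    (hnonneg : ∀ i, 0 ≤ lam i) (hlam : lam ≠ 0)
    (τ : ℝ) (hτ : 0 < τ)
    (b : Fin n → ℝ) (hbC : b ∈ coneC n) (hb : τ < kappa lam b)
    (p q : Fin n → ℝ)
    (hp : IsMinimizer {x | kappa lam x ≤ τ} b p)
    (hq : IsMinimizer {x | x ∈ coneC n ∧ ∑ i, lam i * x i = τ} b q) :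
    p = q := by
  -- q lies in the OWL1 ball
  have hqball : kappa lam q ≤ τ := by
    rw [kappa, absDesc_of_mem_coneC hq.1.1]
    exact le_of_eq hq.1.2
  -- q minimizes the distance over the OWL1 ball
  have hq_min_ball : ∀ x, kappa lam x ≤ τ →
      ∑ i, (q i - b i)^2 ≤ ∑ i, (x i - b i)^2 := by
    intro x hx
    obtain ⟨y, hy, hyx⟩ := reduce_to_polyhedron lam τ b hbC hb x hx
    have := hq.2 y hy
    linarith
  -- hence p and q give the same value
  have hfeq : ∑ i, (p i - b i)^2 = ∑ i, (q i - b i)^2 := by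
    have h1 := hp.2 q hqball
    have h2 := hq_min_ball p hp.1
    linarith
  -- the midpoint lies in the ball
  set m : Fin n → ℝ := fun i => (p i + q i) / 2 with hm_def
  have hmball : kappa lam m ≤ τ := by
    set π : Equiv.Perm (Fin n) :=
      Fin.revPerm.trans (Tuple.sort fun j => |m j|) with hπ
    have h1 : ∀ i, absDesc m i = |m (π i)| := fun i => by
      simp [absDesc, hπ]
    have keyp := sum_mul_abs_comp_perm_le lam hmono p π
    have keyq := sum_mul_abs_comp_perm_le lam hmono q π
    have habs : ∀ j, |m j| ≤ (|p j| + |q j|) / 2 := by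
      intro j
      calc |m j| = |p j + q j| / 2 := by
            rw [hm_def, abs_div, abs_two]
        _ ≤ (|p j| + |q j|) / 2 := by gcongr; exact abs_add_le _ _
    have step : kappa lam m
        ≤ (1/2) * ∑ i, lam i * |p (π i)| + (1/2) * ∑ i, lam i * |q (π i)| := by
      rw [kappa]
      calc ∑ i, lam i * absDesc m i = ∑ i, lam i * |m (π i)| :=
            Finset.sum_congr rfl fun i _ => by rw [h1]
        _ ≤ ∑ i, (1/2 * (lam i * |p (π i)|) + 1/2 * (lam i * |q (π i)|)) := by
            refine Finset.sum_le_sum fun i _ => ?_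
            have := mul_le_mul_of_nonneg_left (habs (π i)) (hnonneg i)
            linarith
        _ = (1/2) * ∑ i, lam i * |p (π i)| + (1/2) * ∑ i, lam i * |q (π i)| := by
            rw [Finset.sum_add_distrib, ← Finset.mul_sum, ← Finset.mul_sum]
    have hpball : kappa lam p ≤ τ := hp.1
    calc kappa lam m ≤ _ := step
      _ ≤ (1/2) * kappa lam p + (1/2) * kappa lam q := by
          have : (0:ℝ) ≤ 1/2 := by norm_num
          exact add_le_add (mul_le_mul_of_nonneg_left keyp this)
            (mul_le_mul_of_nonneg_left keyq this)
      _ ≤ τ := by linarith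
  -- parallelogram identity forces p = q
  have hfm := hp.2 m hmball
  have hid : ∑ i, (m i - b i)^2
      = (∑ i, (p i - b i)^2)/2 + (∑ i, (q i - b i)^2)/2 - (∑ i, (p i - q i)^2)/4 := by
    rw [Finset.sum_div, Finset.sum_div, Finset.sum_div,
      ← Finset.sum_add_distrib, ← Finset.sum_sub_distrib]
    exact Finset.sum_congr rfl fun i _ => by rw [hm_def]; ring
  have hle : ∑ i, (p i - q i)^2 ≤ 0 := by
    rw [hid] at hfm
    linarith
  have hzero : ∑ i, (p i - q i)^2 = 0 :=
    le_antisymm hle (Finset.sum_nonneg fun i _ => sq_nonneg _)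
  funext i
  have := (Finset.sum_eq_zero_iff_of_nonneg
    (fun i _ => sq_nonneg (p i - q i))).mp hzero i (Finset.mem_univ i)
  have h := pow_eq_zero_iff (n := 2) (by norm_num) |>.mp this
  linarith [sub_eq_zero.mp h]
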